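/- arXiv:2005.01789 — 5 statements merged into one kernel-verified Lean document; each statement's English description precedes it below -/
import Mathlib

section
/- Under the hypotheses on a₀, l and a, the primitive G(y) = G₀(|y|), where G₀(t) = ∫₀ᵗ a₀(s)s ds, satisfies (c₁/(p(p−1)))·|y|^p ≤ G(y) ≤ c₅(1 + |y|^p) for some constant c₅ > 0 and all y ∈ ℝᴺ. -/
/-!
Put `f t = a₀ t * t`. On a ray `r ↦ r • e` with `‖e‖ = 1` the field `a` is `r ↦ f r • e`, so
`Da (t • e) e = f' t • e`, and the coercivity and operator-norm bounds on `Da` squeeze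
`l t / t ≤ f' t ≤ c₃ * l t / t`. With `c₁ t^(p-1) ≤ l t` and `f → 0` at `0⁺`, comparison with
`c₁ t^(p-1) / (p-1)` gives the lower bound on `f`, hence on `G₀ = ∫₀ f`. For the upper bound,
`f` is increasing, so `G₀ T ≤ T f T`, and for `t ≥ 1` the growth bound on `l` gives
`f' t ≤ 2 c₃ c₂ t^(p-2)`, i.e. `f t ≤ f 1 + C t^(p-1)`.
-/

open Set Filter Topology MeasureTheory intervalIntegral

lemma HasFDerivAt.apply_eq_smul_of_eventuallyEq {E : Type*} [NormedAddCommGroup E]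
    [NormedSpace ℝ E] {a : E → E} {D : E →L[ℝ] E} {φ : ℝ → ℝ} {φ' t : ℝ} {e : E}
    (hD : HasFDerivAt a D (t • e)) (hφ : HasDerivAt φ φ' t)
    (ha : (fun r : ℝ => a (r • e)) =ᶠ[𝓝 t] fun r => φ r • e) : D e = φ' • e := by
  have hline : HasDerivAt (fun r : ℝ => a (r • e)) (D e) t := by
    simpa [Function.comp_def] using hD.comp_hasDerivAt t ((hasDerivAt_id t).smul_const e)
  exact hline.unique ((hφ.smul_const e).congr_of_eventuallyEq ha)

lemma le_deriv_and_deriv_le_of_radial {E : Type*} [NormedAddCommGroup E]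
    [InnerProductSpace ℝ E] {a : E → E} {Da : E → E →L[ℝ] E} {a₀ m M : ℝ → ℝ} {φ' t : ℝ}
    {e : E} (he : ‖e‖ = 1) (ha : ∀ y, y ≠ 0 → a y = a₀ ‖y‖ • y)
    (hDa : ∀ y, y ≠ 0 → HasFDerivAt a (Da y) y)
    (hcoerc : ∀ y, y ≠ 0 → ∀ ξ, m ‖y‖ * ‖ξ‖ ^ 2 ≤ inner ℝ (Da y ξ) ξ)
    (hbound : ∀ y, y ≠ 0 → ‖Da y‖ ≤ M ‖y‖) (ht : 0 < t)
    (hφ : HasDerivAt (fun r => a₀ r * r) φ' t) : m t ≤ φ' ∧ φ' ≤ M t := by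
  have hnorm : ∀ r : ℝ, 0 < r → ‖r • e‖ = r := fun r hr => by
    rw [norm_smul, he, mul_one, Real.norm_of_nonneg hr.le]
  have hne : ∀ r : ℝ, 0 < r → r • e ≠ 0 := fun r hr => by
    rw [← norm_pos_iff, hnorm r hr]; exact hr
  have hDe : Da (t • e) e = φ' • e := by
    refine (hDa _ (hne t ht)).apply_eq_smul_of_eventuallyEq hφ ?_
    filter_upwards [eventually_gt_nhds ht] with r hr
    rw [ha _ (hne r hr), hnorm r hr, smul_smul]
  constructor
  · simpa [hDe, real_inner_smul_left, he, hnorm t ht] using hcoerc _ (hne t ht) e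
  · calc φ' ≤ ‖Da (t • e) e‖ := by rw [hDe, norm_smul, he, mul_one]; exact Real.le_norm_self φ'
      _ ≤ ‖Da (t • e)‖ := by simpa [he] using (Da (t • e)).le_opNorm e
      _ ≤ M t := by simpa [hnorm t ht] using hbound _ (hne t ht)

lemma continuousOn_Ici_of_hasDerivAt {f f' : ℝ → ℝ} {a : ℝ}
    (hfa : ContinuousWithinAt f (Ici a) a) (hf : ∀ x, a < x → HasDerivAt f (f' x) x) :
    ContinuousOn f (Ici a) := by
  intro x hx
  rcases (mem_Ici.mp hx).eq_or_lt with rfl | hax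
  · exact hfa
  · exact (hf x hax).continuousAt.continuousWithinAt

lemma monotoneOn_Ici_of_hasDerivAt_nonneg {f f' : ℝ → ℝ} {a : ℝ}
    (hfa : ContinuousWithinAt f (Ici a) a) (hf : ∀ x, a < x → HasDerivAt f (f' x) x)
    (hf' : ∀ x, a < x → 0 ≤ f' x) : MonotoneOn f (Ici a) := by
  refine monotoneOn_of_hasDerivWithinAt_nonneg (f' := f') (convex_Ici a)
    (continuousOn_Ici_of_hasDerivAt hfa hf) ?_ ?_
  · rw [interior_Ici]
    exact fun x hx => (hf x hx).hasDerivWithinAt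
  · rw [interior_Ici]
    exact hf'

lemma sub_le_sub_of_hasDerivAt_le {f g f' g' : ℝ → ℝ} {a x : ℝ}
    (hfa : ContinuousWithinAt f (Ici a) a) (hga : ContinuousWithinAt g (Ici a) a)
    (hf : ∀ y, a < y → HasDerivAt f (f' y) y) (hg : ∀ y, a < y → HasDerivAt g (g' y) y)
    (hle : ∀ y, a < y → f' y ≤ g' y) (hx : a ≤ x) : f x - f a ≤ g x - g a := by
  have := monotoneOn_Ici_of_hasDerivAt_nonneg (hga.sub hfa)
    (fun y hy => (hg y hy).sub (hf y hy)) (fun y hy => sub_nonneg.mpr (hle y hy))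
    self_mem_Ici (mem_Ici.mpr hx) hx
  simp only [Pi.sub_apply] at this
  linarith

lemma hasDerivAt_rpow_div_self {q x : ℝ} (hq : q ≠ 0) (hx : 0 < x) :
    HasDerivAt (fun y => y ^ q / q) (x ^ q / x) x := by
  have h := (Real.hasDerivAt_rpow_const (p := q) (Or.inl hx.ne')).div_const q
  rwa [Real.rpow_sub_one hx.ne', mul_div_cancel_left₀ _ hq] at h

section Profile

variable {f f' : ℝ → ℝ} {p c : ℝ}

lemma rpow_div_le_of_le_deriv (hp : 1 < p) (hf : ∀ t, 0 < t → HasDerivAt f (f' t) t)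
    (hcont : ContinuousWithinAt f (Ici 0) 0) (hf_zero : f 0 = 0)
    (hf' : ∀ t, 0 < t → c * (t ^ (p - 1) / t) ≤ f' t) {t : ℝ} (ht : 0 ≤ t) :
    c * (t ^ (p - 1) / (p - 1)) ≤ f t := by
  have hq : 0 < p - 1 := by linarith
  have hcomp := sub_le_sub_of_hasDerivAt_le
    (((Real.continuous_rpow_const hq.le).div_const _).const_mul c).continuousWithinAt hcont
    (fun y hy => (hasDerivAt_rpow_div_self hq.ne' hy).const_mul c) hf hf' ht
  simpa [Real.zero_rpow hq.ne', hf_zero] using hcomp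

lemma le_integral_of_le_deriv (hp : 1 < p) (hf : ∀ t, 0 < t → HasDerivAt f (f' t) t)
    (hcont : ContinuousWithinAt f (Ici 0) 0) (hf_zero : f 0 = 0)
    (hf' : ∀ t, 0 < t → c * (t ^ (p - 1) / t) ≤ f' t) {T : ℝ} (hT : 0 ≤ T) :
    c / (p * (p - 1)) * T ^ p ≤ ∫ t in 0..T, f t := by
  have hq : 0 < p - 1 := by linarith
  have hint : IntervalIntegrable f volume 0 T :=
    ((continuousOn_Ici_of_hasDerivAt hcont hf).mono
      (by rw [uIcc_of_le hT]; exact Icc_subset_Ici_self)).intervalIntegrable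
  calc c / (p * (p - 1)) * T ^ p = ∫ t in 0..T, c * (t ^ (p - 1) / (p - 1)) := by
        rw [intervalIntegral.integral_const_mul, intervalIntegral.integral_div,
          integral_rpow (Or.inl (by linarith)), sub_add_cancel, Real.zero_rpow (by linarith),
          sub_zero]
        field_simp
    _ ≤ ∫ t in 0..T, f t :=
        integral_mono_on hT
          ((((Real.continuous_rpow_const hq.le).div_const _).const_mul c).intervalIntegrable _ _)
          hint fun t ht => rpow_div_le_of_le_deriv hp hf hcont hf_zero hf' ht.1

lemma exists_integral_le_mul_one_add_rpow (hp : 1 < p)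
    (hf : ∀ t, 0 < t → HasDerivAt f (f' t) t)
    (hcont : ContinuousWithinAt f (Ici 0) 0) (hf_zero : f 0 = 0) (hf'0 : ∀ t, 0 < t → 0 ≤ f' t)
    (hc : 0 < c) (hf' : ∀ t, 1 < t → f' t ≤ c * (t ^ (p - 1) / t)) :
    ∃ C, 0 < C ∧ ∀ T, 0 ≤ T → ∫ t in 0..T, f t ≤ C * (1 + T ^ p) := by
  have hq : 0 < p - 1 := by linarith
  have hmono := monotoneOn_Ici_of_hasDerivAt_nonneg hcont hf hf'0
  have hf1 : 0 ≤ f 1 := hf_zero ▸ hmono self_mem_Ici (mem_Ici.mpr zero_le_one) zero_le_one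
  have hbound : ∀ t, 0 ≤ t → f t ≤ f 1 + c * (t ^ (p - 1) / (p - 1)) := by
    intro t ht
    have hpow : 0 ≤ c * (t ^ (p - 1) / (p - 1)) := by positivity
    rcases le_total t 1 with ht1 | ht1
    · linarith [hmono (mem_Ici.mpr ht) (mem_Ici.mpr zero_le_one) ht1]
    · have hcomp := sub_le_sub_of_hasDerivAt_le
        (hf 1 one_pos).continuousAt.continuousWithinAt
        (((Real.continuous_rpow_const hq.le).div_const _).const_mul c).continuousWithinAt
        (fun y hy => hf y (by linarith))
        (fun y hy => (hasDerivAt_rpow_div_self hq.ne' (by linarith)).const_mul c) hf' ht1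
      have : 0 ≤ c * (1 ^ (p - 1) / (p - 1)) := by positivity
      linarith
  refine ⟨f 1 + c / (p - 1), by positivity, fun T hT => ?_⟩
  have hT1 : T ≤ 1 + T ^ p := by
    rcases le_total T 1 with h | h
    · linarith [Real.rpow_nonneg hT p]
    · linarith [Real.self_le_rpow_of_one_le h hp.le]
  calc ∫ t in 0..T, f t ≤ ∫ _ in 0..T, f T :=
        integral_mono_on hT
          (hmono.mono (by rw [uIcc_of_le hT]; exact Icc_subset_Ici_self)).intervalIntegrable
          intervalIntegrable_const fun t ht => hmono (mem_Ici.mpr ht.1) (mem_Ici.mpr hT) ht.2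
    _ = T * f T := by simp
    _ ≤ T * (f 1 + c * (T ^ (p - 1) / (p - 1))) := mul_le_mul_of_nonneg_left (hbound T hT) hT
    _ = f 1 * T + c / (p - 1) * T ^ p := by
        have hpow : T ^ (p - 1) * T = T ^ p := by
          rw [← Real.rpow_add_one' hT (by linarith), sub_add_cancel]
        rw [← hpow]
        field_simp
    _ ≤ (f 1 + c / (p - 1)) * (1 + T ^ p) := by
        have : 0 ≤ c / (p - 1) := by positivity
        nlinarith [Real.rpow_nonneg hT p]

end Profile

theorem stmt_4_general {N : ℕ} (hN : 1 ≤ N)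
    (s p : ℝ) (hs : 1 ≤ s) (hsp : s < p)
    (l : ℝ → ℝ) (c₁ c₂ : ℝ)
    (hc₁ : 0 < c₁) (hc₂ : 0 < c₂)
    (hl_bound : ∀ t, 0 < t →
      c₁ * t ^ (p - 1) ≤ l t ∧ l t ≤ c₂ * (t ^ (s - 1) + t ^ (p - 1)))
    (a₀ a₀' : ℝ → ℝ)
    (ha₀_deriv : ∀ t, 0 < t → HasDerivAt a₀ (a₀' t) t)
    (ha₀_lim : Tendsto (fun t => a₀ t * t) (nhdsWithin 0 (Ioi 0)) (nhds 0))
    (a : EuclideanSpace ℝ (Fin N) → EuclideanSpace ℝ (Fin N))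
    (ha : ∀ y, y ≠ 0 → a y = a₀ ‖y‖ • y)
    (Da : EuclideanSpace ℝ (Fin N) →
      (EuclideanSpace ℝ (Fin N) →L[ℝ] EuclideanSpace ℝ (Fin N)))
    (hDa : ∀ y, y ≠ 0 → HasFDerivAt a (Da y) y)
    (c₃ : ℝ) (hc₃ : 0 < c₃)
    (hDa_bound : ∀ y, y ≠ 0 → ‖Da y‖ ≤ c₃ * l ‖y‖ / ‖y‖)
    (hDa_coerc : ∀ y, y ≠ 0 → ∀ ξ : EuclideanSpace ℝ (Fin N),
      (l ‖y‖ / ‖y‖) * ‖ξ‖ ^ 2 ≤ inner ℝ (Da y ξ) ξ) :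
    ∀ G₀ : ℝ → ℝ, (∀ t, G₀ t = ∫ u in (0:ℝ)..t, a₀ u * u) →
      ∃ c₅, 0 < c₅ ∧ ∀ y : EuclideanSpace ℝ (Fin N),
        c₁ / (p * (p - 1)) * ‖y‖ ^ p ≤ G₀ ‖y‖ ∧ G₀ ‖y‖ ≤ c₅ * (1 + ‖y‖ ^ p) := by
  intro G₀ hG₀
  have hp : 1 < p := by linarith
  obtain ⟨e, he⟩ : ∃ e : EuclideanSpace ℝ (Fin N), ‖e‖ = 1 :=
    ⟨EuclideanSpace.single ⟨0, hN⟩ 1, by simp⟩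
  have hf : ∀ t, 0 < t → HasDerivAt (fun u => a₀ u * u) (a₀' t * t + a₀ t) t := fun t ht => by
    simpa using (ha₀_deriv t ht).fun_mul (hasDerivAt_id' t)
  have hcont : ContinuousWithinAt (fun u => a₀ u * u) (Ici 0) 0 :=
    continuousWithinAt_Ioi_iff_Ici.mp (by simpa [ContinuousWithinAt] using ha₀_lim)
  have hf' : ∀ t, 0 < t → l t / t ≤ a₀' t * t + a₀ t ∧ a₀' t * t + a₀ t ≤ c₃ * l t / t :=
    fun t ht => le_deriv_and_deriv_le_of_radial (m := fun r => l r / r)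
      (M := fun r => c₃ * l r / r) he ha hDa hDa_coerc hDa_bound ht (hf t ht)
  have hf'_lower : ∀ t, 0 < t → c₁ * (t ^ (p - 1) / t) ≤ a₀' t * t + a₀ t := by
    intro t ht
    rw [← mul_div_assoc]
    exact (div_le_div_of_nonneg_right (hl_bound t ht).1 ht.le).trans (hf' t ht).1
  have hf'_upper : ∀ t, 1 < t → a₀' t * t + a₀ t ≤ 2 * c₃ * c₂ * (t ^ (p - 1) / t) := by
    intro t ht
    have hst : t ^ (s - 1) ≤ t ^ (p - 1) := Real.rpow_le_rpow_of_exponent_le ht.le (by linarith)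
    have hl : l t ≤ 2 * c₂ * t ^ (p - 1) := by
      nlinarith [(hl_bound t (by linarith)).2]
    calc _ ≤ c₃ * l t / t := (hf' t (by linarith)).2
      _ ≤ c₃ * (2 * c₂ * t ^ (p - 1)) / t := by gcongr
      _ = 2 * c₃ * c₂ * (t ^ (p - 1) / t) := by ring
  obtain ⟨C, hC, hG⟩ := exists_integral_le_mul_one_add_rpow hp hf hcont (by simp)
    (fun t ht => (by positivity : 0 ≤ c₁ * (t ^ (p - 1) / t)).trans (hf'_lower t ht))
    (by positivity) hf'_upper
  refine ⟨C, hC, fun y => ?_⟩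
  rw [hG₀]
  exact ⟨le_integral_of_le_deriv hp hf hcont (by simp) hf'_lower (norm_nonneg y),
    hG _ (norm_nonneg y)⟩

/-- Corollary 3: the primitive `G(y) = G₀(|y|)` satisfies
`(c₁/(p(p-1))) |y|^p ≤ G(y) ≤ c₅ (1 + |y|^p)` for some `c₅ > 0`. -/
theorem stmt_4 {N : ℕ} (hN : 1 ≤ N)
    (s p : ℝ) (hs : 1 ≤ s) (hsp : s < p)
    (l l' : ℝ → ℝ) (chat c₀ c₁ c₂ : ℝ)
    (hchat : 0 < chat) (hc₀ : 0 < c₀) (hc₁ : 0 < c₁) (hc₂ : 0 < c₂)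
    (hl_pos : ∀ t, 0 < t → 0 < l t)
    (hl_deriv : ∀ t, 0 < t → HasDerivAt l (l' t) t)
    (hl'_cont : ContinuousOn l' (Ioi 0))
    (hl_ratio : ∀ t, 0 < t → chat ≤ l' t * t / l t ∧ l' t * t / l t ≤ c₀)
    (hl_bound : ∀ t, 0 < t →
      c₁ * t ^ (p - 1) ≤ l t ∧ l t ≤ c₂ * (t ^ (s - 1) + t ^ (p - 1)))
    (a₀ a₀' : ℝ → ℝ)
    (ha₀_pos : ∀ t, 0 < t → 0 < a₀ t)
    (ha₀_deriv : ∀ t, 0 < t → HasDerivAt a₀ (a₀' t) t)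
    (ha₀'_cont : ContinuousOn a₀' (Ioi 0))
    (ha₀_mono : StrictMonoOn a₀ (Ioi 0))
    (ha₀_lim : Tendsto (fun t => a₀ t * t) (nhdsWithin 0 (Ioi 0)) (nhds 0))
    (a : EuclideanSpace ℝ (Fin N) → EuclideanSpace ℝ (Fin N))
    (ha : ∀ y, y ≠ 0 → a y = a₀ ‖y‖ • y) (ha0 : a 0 = 0)
    (Da : EuclideanSpace ℝ (Fin N) →
      (EuclideanSpace ℝ (Fin N) →L[ℝ] EuclideanSpace ℝ (Fin N)))
    (hDa : ∀ y, y ≠ 0 → HasFDerivAt a (Da y) y)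
    (c₃ : ℝ) (hc₃ : 0 < c₃)
    (hDa_bound : ∀ y, y ≠ 0 → ‖Da y‖ ≤ c₃ * l ‖y‖ / ‖y‖)
    (hDa_coerc : ∀ y, y ≠ 0 → ∀ ξ : EuclideanSpace ℝ (Fin N),
      (l ‖y‖ / ‖y‖) * ‖ξ‖ ^ 2 ≤ inner ℝ (Da y ξ) ξ) :
    ∀ G₀ : ℝ → ℝ, (∀ t, G₀ t = ∫ u in (0:ℝ)..t, a₀ u * u) →
      ∃ c₅, 0 < c₅ ∧ ∀ y : EuclideanSpace ℝ (Fin N),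
        c₁ / (p * (p - 1)) * ‖y‖ ^ p ≤ G₀ ‖y‖ ∧ G₀ ‖y‖ ≤ c₅ * (1 + ‖y‖ ^ p) :=
  stmt_4_general hN s p hs hsp l c₁ c₂ hc₁ hc₂ hl_bound a₀ a₀' ha₀_deriv ha₀_lim a ha Da hDa c₃ hc₃
    hDa_bound hDa_coerc
end

section
/- Let p > 1 and let f: [0,∞) → [0,∞) be continuous with primitive F(x) = ∫₀ˣ f(s)ds. Assume that F(x)/x^p → +∞ as x → +∞, and that there exist σ > 0 and β̂₀ > 0 with liminf_{x→+∞} (f(x)x − pF(x))/x^σ ≥ β̂₀. Then f(x)/x^{p−1} → +∞ as x → +∞. -/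
open Set Filter

/-- (5): superlinearity of `F` at `+∞` together with the quasi-monotonicity-type
liminf condition implies `f(x)/x^{p-1} → +∞` as `x → +∞`. -/
theorem stmt_9 (p σ β₀ : ℝ) (hp : 1 < p) (hσ : 0 < σ) (hβ₀ : 0 < β₀)
    (f : ℝ → ℝ) (hf_cont : ContinuousOn f (Ici 0))
    (hf_nonneg : ∀ x, 0 ≤ x → 0 ≤ f x)
    (F : ℝ → ℝ) (hF : ∀ x, F x = ∫ u in (0:ℝ)..x, f u)
    (hFlim : Tendsto (fun x => F x / x ^ p) atTop atTop)
    (hliminf : ∀ ε, 0 < ε →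
      ∀ᶠ x in atTop, β₀ - ε < (f x * x - p * F x) / x ^ σ) :
    Tendsto (fun x => f x / x ^ (p - 1)) atTop atTop := by
  have h1 : Tendsto (fun x => p * (F x / x ^ p)) atTop atTop :=
    hFlim.const_mul_atTop (by linarith)
  apply tendsto_atTop_mono' atTop _ h1
  filter_upwards [hliminf (β₀ / 2) (by linarith), eventually_gt_atTop (0 : ℝ)]
    with x hx hx0
  have hxσ : 0 < x ^ σ := Real.rpow_pos_of_pos hx0 σ
  have hxp : 0 < x ^ p := Real.rpow_pos_of_pos hx0 p
  have hq : 0 < (f x * x - p * F x) / x ^ σ := lt_trans (by linarith) hx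
  have h2 : 0 ≤ f x * x - p * F x := by
    rcases div_pos_iff.mp hq with ⟨h, _⟩ | ⟨_, h⟩
    · exact h.le
    · linarith
  have hrw : f x / x ^ (p - 1) = f x * x / x ^ p := by
    rw [show x ^ p = x ^ (p - 1) * x by
      rw [← Real.rpow_add_one hx0.ne' (p - 1)]; ring_nf]
    rw [mul_div_mul_right _ _ hx0.ne']
  rw [hrw, mul_div_assoc' p (F x) (x ^ p)]
  exact div_le_div_of_nonneg_right (by linarith) hxp.le |>.trans_eq rfl
end

section
/- Let 1 < q < p < r, let β > 0 and λ > 0, and let f: [0,∞) → [0,∞) be continuous with f(0) = 0, f(x) ≤ a(1 + x^{r−1}) for all x ≥ 0 and some a > 0, and limsup_{x→0⁺} f(x)/x^{r−1} ≤ η₀ for some η₀ ≥ 0. Then there exist constants c₁₀, c₁₁ > 0 such that λx^{q−1} + f(x) ≤ λc₁₀x^{q−1} + c₁₁x^{r−1} − βx^{p−1} for all x ≥ 0. -/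
open Set Filter

/-- (9): there exist `c₁₀, c₁₁ > 0` such that
`λ x^{q-1} + f(x) ≤ λ c₁₀ x^{q-1} + c₁₁ x^{r-1} - β x^{p-1}` for all `x ≥ 0`. -/
theorem stmt_11 (q p r : ℝ) (hq : 1 < q) (hqp : q < p) (hpr : p < r)
    (β lam a η₀ : ℝ) (hβ : 0 < β) (hlam : 0 < lam) (ha : 0 < a) (hη₀ : 0 ≤ η₀)
    (f : ℝ → ℝ) (hf_cont : ContinuousOn f (Ici 0)) (hf0 : f 0 = 0)
    (hf_nonneg : ∀ x, 0 ≤ x → 0 ≤ f x)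
    (hf_growth : ∀ x, 0 ≤ x → f x ≤ a * (1 + x ^ (r - 1)))
    (hf_limsup : ∀ ε, 0 < ε →
      ∀ᶠ x in nhdsWithin 0 (Ioi 0), f x / x ^ (r - 1) < η₀ + ε) :
    ∃ c₁₀ c₁₁, 0 < c₁₀ ∧ 0 < c₁₁ ∧ ∀ x, 0 ≤ x →
      lam * x ^ (q - 1) + f x ≤
        lam * c₁₀ * x ^ (q - 1) + c₁₁ * x ^ (r - 1) - β * x ^ (p - 1) := by
  have h1 := hf_limsup 1 one_pos
  rw [eventually_nhdsWithin_iff, Metric.eventually_nhds_iff] at h1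
  obtain ⟨ε, hε, hball⟩ := h1
  set δ : ℝ := min ε 1 with hδdef
  have hδ : 0 < δ := lt_min hε one_pos
  have hδ1 : δ ≤ 1 := min_le_right _ _
  have hδε : δ ≤ ε := min_le_left _ _
  have hδq : 0 < δ ^ (q - 1) := Real.rpow_pos_of_pos hδ _
  set A : ℝ := a / δ ^ (q - 1) with hAdef
  have hA : 0 < A := div_pos ha hδq
  refine ⟨1 + (β + A) / lam, η₀ + 1 + a + β, by positivity, by positivity, ?_⟩
  intro x hx
  have hlc : lam * (1 + (β + A) / lam) = lam + (β + A) := by field_simp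
  rcases eq_or_lt_of_le hx with h0 | hx0
  · simp [← h0, Real.zero_rpow (by linarith : q - 1 ≠ 0),
      Real.zero_rpow (by linarith : p - 1 ≠ 0),
      Real.zero_rpow (by linarith : r - 1 ≠ 0), hf0]
  have hxq : 0 < x ^ (q - 1) := Real.rpow_pos_of_pos hx0 _
  have hxr : 0 < x ^ (r - 1) := Real.rpow_pos_of_pos hx0 _
  have hxp : 0 < x ^ (p - 1) := Real.rpow_pos_of_pos hx0 _
  have key : f x + β * x ^ (p - 1) ≤ (β + A) * x ^ (q - 1)
      + (η₀ + 1 + a + β) * x ^ (r - 1) := by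
    rcases lt_or_ge x δ with hxδ | hxδ
    · -- small x
      have hx1 : x ≤ 1 := le_of_lt (lt_of_lt_of_le hxδ hδ1)
      have hdist : dist x 0 < ε := by
        rw [Real.dist_eq, sub_zero, abs_of_pos hx0]; linarith
      have hfx : f x / x ^ (r - 1) < η₀ + 1 := hball hdist hx0
      have hfx' : f x < (η₀ + 1) * x ^ (r - 1) := by
        rwa [div_lt_iff₀ hxr] at hfx
      have hpq : x ^ (p - 1) ≤ x ^ (q - 1) :=
        Real.rpow_le_rpow_of_exponent_ge hx0 hx1 (by linarith)
      have hb : β * x ^ (p - 1) ≤ β * x ^ (q - 1) :=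
        mul_le_mul_of_nonneg_left hpq hβ.le
      nlinarith [mul_pos hA hxq, mul_pos ha hxr, mul_pos hβ hxr]
    · -- large x
      have hgrow := hf_growth x hx
      have hδx : δ ^ (q - 1) ≤ x ^ (q - 1) :=
        Real.rpow_le_rpow hδ.le hxδ (by linarith)
      have haA : a ≤ A * x ^ (q - 1) := by
        rw [hAdef, div_mul_eq_mul_div, le_div_iff₀ hδq]
        nlinarith
      have hbp : x ^ (p - 1) ≤ x ^ (q - 1) + x ^ (r - 1) := by
        rcases le_total x 1 with hx1 | hx1
        · have := Real.rpow_le_rpow_of_exponent_ge hx0 hx1 (by linarith : q - 1 ≤ p - 1)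
          linarith
        · have := Real.rpow_le_rpow_of_exponent_le hx1 (by linarith : p - 1 ≤ r - 1)
          linarith
      have hb : β * x ^ (p - 1) ≤ β * (x ^ (q - 1) + x ^ (r - 1)) :=
        mul_le_mul_of_nonneg_left hbp hβ.le
      nlinarith [mul_nonneg (by linarith : (0:ℝ) ≤ η₀ + 1) hxr.le]
  rw [hlc]
  nlinarith [key]
end

section
/- Let 1 < q < p, let γ ∈ (0,1), let ϑ: (0,∞) → (0,∞) be nonincreasing with liminf_{x→0⁺} ϑ(x)x^γ ≥ c₆ for some c₆ > 0, and let f: [0,∞) → [0,∞) be a function with lim_{x→+∞} f(x)/x^{p−1} = +∞. Then there exists λ₀ > 0 such that ϑ(x) + λ₀x^{q−1} + f(x) ≥ x^{p−1} for all x > 0. -/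
open Set Filter

/-- (40): there exists `λ₀ > 0` such that
`ϑ(x) + λ₀ x^{q-1} + f(x) ≥ x^{p-1}` for all `x > 0`. -/
theorem stmt_14 (q p γ c₆ : ℝ) (hq : 1 < q) (hqp : q < p)
    (hγ0 : 0 < γ) (hγ1 : γ < 1) (hc₆ : 0 < c₆)
    (ϑ : ℝ → ℝ) (hϑ_pos : ∀ x, 0 < x → 0 < ϑ x)
    (hϑ_anti : AntitoneOn ϑ (Ioi 0))
    (hϑ_liminf : ∀ ε, 0 < ε →
      ∀ᶠ x in nhdsWithin 0 (Ioi 0), c₆ - ε < ϑ x * x ^ γ)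
    (f : ℝ → ℝ) (hf_nonneg : ∀ x, 0 ≤ x → 0 ≤ f x)
    (hf_lim : Tendsto (fun x => f x / x ^ (p - 1)) atTop atTop) :
    ∃ lam₀, 0 < lam₀ ∧ ∀ x, 0 < x →
      x ^ (p - 1) ≤ ϑ x + lam₀ * x ^ (q - 1) + f x := by
  obtain ⟨M, hM⟩ := eventually_atTop.mp (hf_lim.eventually_ge_atTop 1)
  set N := max M 1 with hN
  have hN1 : (1 : ℝ) ≤ N := le_max_right _ _
  have hN0 : (0 : ℝ) < N := lt_of_lt_of_le one_pos hN1
  refine ⟨N ^ (p - q), Real.rpow_pos_of_pos hN0 _, fun x hx => ?_⟩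
  rcases le_or_gt x N with hxN | hxN
  · have h1 : x ^ (p - 1) = x ^ (p - q) * x ^ (q - 1) := by
      rw [← Real.rpow_add hx]; ring_nf
    have h2 : x ^ (p - q) ≤ N ^ (p - q) :=
      Real.rpow_le_rpow hx.le hxN (by linarith)
    have h3 : x ^ (p - q) * x ^ (q - 1) ≤ N ^ (p - q) * x ^ (q - 1) :=
      mul_le_mul_of_nonneg_right h2 (Real.rpow_nonneg hx.le _)
    have := hϑ_pos x hx
    have := hf_nonneg x hx.le
    linarith [h1 ▸ h3]
  · have hxM : M ≤ x := le_trans (le_max_left M 1) hxN.le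
    have hxp : (0 : ℝ) < x ^ (p - 1) := Real.rpow_pos_of_pos hx _
    have h1 : x ^ (p - 1) ≤ f x := by
      have := hM x hxM
      rwa [le_div_iff₀ hxp, one_mul] at this
    have := hϑ_pos x hx
    have h2 : 0 ≤ N ^ (p - q) * x ^ (q - 1) :=
      mul_nonneg (Real.rpow_nonneg hN0.le _) (Real.rpow_nonneg hx.le _)
    linarith
end

section
/- Let p > 1 and define f(x) = x^{p−1}ln(1+x) for x ≥ 0, with primitive F(x) = ∫₀ˣ f(s)ds. Then f fails the Ambrosetti–Rabinowitz condition: for every γ > p there is no M > 0 such that γF(x) ≤ f(x)x for all x ≥ M. -/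
/-!
Splitting `∫₀ˣ f` at `t x` and bounding `ln(1+s) ≥ ln(1+tx)` on `[tx, x]` gives
`F(x) ≥ (1 - t^p) x^p ln(1+tx) / p`. With `t^p = (γ-p)/(2γ)`, the condition `γF(x) ≤ f(x)x`
would force `c ln(1+tx) ≤ ln(1+x)` with `c = (γ+p)/(2p) > 1` for all large `x`, which fails
because `ln(1+tx) - ln(1+x)` stays bounded while `(c - 1) ln(1+x) → ∞`.
-/

open Set Filter Real intervalIntegral

theorem intervalIntegrable_rpow_mul_log_one_add {p a b : ℝ} (hp : 1 ≤ p) (ha : 0 ≤ a)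
    (hb : 0 ≤ b) :
    IntervalIntegrable (fun s => s ^ (p - 1) * log (1 + s)) MeasureTheory.volume a b := by
  refine ContinuousOn.intervalIntegrable ?_
  refine (continuous_rpow_const (by linarith)).continuousOn.mul (ContinuousOn.log (by fun_prop) ?_)
  intro s hs
  have : 0 ≤ s := (le_min ha hb).trans hs.1
  positivity

theorem log_one_add_mul_sub_rpow_le_integral {p y x : ℝ} (hp : 1 ≤ p) (hy : 0 ≤ y)
    (hyx : y ≤ x) :
    log (1 + y) * ((x ^ p - y ^ p) / p) ≤ ∫ s in y..x, s ^ (p - 1) * log (1 + s) := by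
  have hconst : ∫ s in y..x, log (1 + y) * s ^ (p - 1) = log (1 + y) * ((x ^ p - y ^ p) / p) := by
    rw [integral_const_mul, integral_rpow (Or.inl (by linarith))]
    simp
  rw [← hconst]
  refine integral_mono_on hyx ?_
    (intervalIntegrable_rpow_mul_log_one_add hp hy (hy.trans hyx)) fun s hs => ?_
  · exact (continuous_const.mul (continuous_rpow_const (by linarith))).intervalIntegrable _ _
  · rw [mul_comm]
    exact mul_le_mul_of_nonneg_left (log_le_log (by linarith) (by linarith [hs.1]))
      (rpow_nonneg (hy.trans hs.1) _)

theorem one_sub_rpow_mul_log_one_add_mul_le_integral {p t x : ℝ} (hp : 1 ≤ p) (ht0 : 0 ≤ t)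
    (ht1 : t ≤ 1) (hx : 0 ≤ x) :
    (1 - t ^ p) * x ^ p / p * log (1 + t * x) ≤
      ∫ s in (0 : ℝ)..x, s ^ (p - 1) * log (1 + s) := by
  have htx : 0 ≤ t * x := by positivity
  rw [← integral_add_adjacent_intervals (intervalIntegrable_rpow_mul_log_one_add hp le_rfl htx)
    (intervalIntegrable_rpow_mul_log_one_add hp htx hx)]
  have hinit : 0 ≤ ∫ s in (0 : ℝ)..t * x, s ^ (p - 1) * log (1 + s) :=
    integral_nonneg htx fun s hs =>
      mul_nonneg (rpow_nonneg hs.1 _) (log_nonneg (by linarith [hs.1]))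
  have htail := log_one_add_mul_sub_rpow_le_integral hp htx (mul_le_of_le_one_left hx ht1)
  rw [mul_rpow ht0 hx] at htail
  have hrw : (1 - t ^ p) * x ^ p / p * log (1 + t * x) =
      log (1 + t * x) * ((x ^ p - t ^ p * x ^ p) / p) := by ring
  linarith

theorem eventually_log_one_add_lt_mul_log_one_add_mul {c t : ℝ} (hc : 1 < c) (ht : 0 < t) :
    ∀ᶠ x in atTop, log (1 + x) < c * log (1 + t * x) := by
  filter_upwards [(tendsto_log_atTop.const_mul_atTop (sub_pos.2 hc)).eventually_gt_atTop
    (log 2 - c * log t), eventually_ge_atTop 1] with x hx hx1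
  have hx0 : 0 < x := by linarith
  have hupper : log (1 + x) ≤ log 2 + log x := by
    rw [← log_mul two_ne_zero hx0.ne']
    exact log_le_log (by linarith) (by linarith)
  have hlower : log t + log x ≤ log (1 + t * x) := by
    rw [← log_mul ht.ne' hx0.ne']
    exact log_le_log (by positivity) (by linarith)
  nlinarith

theorem eventually_rpow_mul_log_one_add_lt_mul_integral {p γ : ℝ} (hp : 1 ≤ p) (hγ : p < γ) :
    ∀ᶠ x in atTop, x ^ p * log (1 + x) < γ * ∫ s in (0 : ℝ)..x, s ^ (p - 1) * log (1 + s) := by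
  have hp0 : 0 < p := by linarith
  set a := (γ - p) / (2 * γ)
  have ha0 : 0 < a := div_pos (by linarith) (by linarith)
  have ha1 : a < 1 := (div_lt_one (by linarith)).2 (by linarith)
  set t := a ^ p⁻¹
  have ht0 : 0 < t := rpow_pos_of_pos ha0 _
  have htp : t ^ p = a := rpow_inv_rpow ha0.le hp0.ne'
  have hc : 1 < (γ + p) / (2 * p) := (one_lt_div (by positivity)).2 (by linarith)
  have hscale : γ * (1 - a) / p = (γ + p) / (2 * p) := by
    have hγ0 : γ ≠ 0 := by linarith
    simp only [a]
    field_simp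
    ring
  filter_upwards [eventually_gt_atTop 0, eventually_log_one_add_lt_mul_log_one_add_mul hc ht0]
    with x hx0 hlog
  have hlow := one_sub_rpow_mul_log_one_add_mul_le_integral hp ht0.le
    (rpow_le_one ha0.le ha1.le (inv_nonneg.2 hp0.le)) hx0.le
  rw [htp] at hlow
  calc x ^ p * log (1 + x) < x ^ p * ((γ + p) / (2 * p) * log (1 + t * x)) :=
        mul_lt_mul_of_pos_left hlog (rpow_pos_of_pos hx0 p)
    _ = γ * ((1 - a) * x ^ p / p * log (1 + t * x)) := by rw [← hscale]; ring
    _ ≤ γ * ∫ s in (0 : ℝ)..x, s ^ (p - 1) * log (1 + s) :=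
        mul_le_mul_of_nonneg_left hlow (by linarith)

/-- `f(x) = x^{p-1} ln(1+x)` fails the Ambrosetti–Rabinowitz condition: for every
`γ > p` there is no `M > 0` with `γ F(x) ≤ f(x) x` for all `x ≥ M`. -/
theorem stmt_16 (p : ℝ) (hp : 1 < p)
    (f F : ℝ → ℝ)
    (hf : ∀ x, 0 ≤ x → f x = x ^ (p - 1) * Real.log (1 + x))
    (hF : ∀ x, F x = ∫ u in (0:ℝ)..x, f u) :
    ∀ γ, p < γ → ¬ ∃ M, 0 < M ∧ ∀ x, M ≤ x → γ * F x ≤ f x * x := by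
  rintro γ hγ ⟨M, hM, hAR⟩
  obtain ⟨x, hxM, hlt⟩ := ((eventually_ge_atTop M).and
    (eventually_rpow_mul_log_one_add_lt_mul_integral hp.le hγ)).exists
  have hx0 : 0 < x := hM.trans_le hxM
  have hFx : F x = ∫ s in (0 : ℝ)..x, s ^ (p - 1) * log (1 + s) :=
    (hF x).trans <| integral_congr fun s hs => hf s (by rw [uIcc_of_le hx0.le] at hs; exact hs.1)
  have hfx : f x * x = x ^ p * log (1 + x) := by
    rw [hf x hx0.le, rpow_sub_one hx0.ne']
    field_simp
  have hAR' := hAR x hxM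
  rw [hFx, hfx] at hAR'
  exact hAR'.not_gt hlt
end
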